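/- Let n, d ∈ ℕ with n ≥ 2 and d ≥ 2 satisfy (n+1)/(n−1) > d/2. Then for every γ ∈ (0, 1 + 1/n + (n−1)·min(1 + 1/n − d/2, 0)) one has sup_{k ∈ ℤ^d} Σ_{l₁,…,l_n ∈ ℤ^d with l₁+⋯+l_n = k} (λ_k)^γ / ( (λ_{l₁})^{1+1/n} ⋯ (λ_{l_n})^{1+1/n} ) < ∞. -/

import Mathlib

/-!
Write `a = 1 + 1/n` and `w_s(v) = λ_v^{-s}`. The inner sum is `λ_k^γ` times the `n`-fold
convolution `w_a * ⋯ * w_a` at `k`, so it suffices to show `w_a^{*n} ≤ C w_γ`. This follows by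
induction on `n` from the convolution estimate `w_p * w_q ≤ C w_r` for `0 ≤ r ≤ p, q` and
`p + q - r > d/2`: since `λ_k ≤ 4 max(λ_v, λ_{k-v})`, a factor `λ_k^{-r}` can be split off the
larger of `λ_v^{-p}`, `λ_{k-v}^{-q}`, leaving `w_{p+q-r}`, which is summable over `ℤ^d`.
Each convolution with `w_a` costs at most `max(d/2 - a, 0)` of decay, up to an arbitrarily small
loss, which gives the bound `a + (n-1) min(a - d/2, 0)` on `γ`.
-/

open scoped ENNReal

/-- `λ_x = 1 + x₁² + ⋯ + x_d²` for a lattice point `x ∈ ℤ^d`. -/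
noncomputable def lam {d : ℕ} (x : Fin d → ℤ) : ℝ := 1 + ∑ i, ((x i : ℝ)) ^ 2

noncomputable def convPow {V : Type*} [AddCommMonoid V] (f : V → ℝ≥0∞) (n : ℕ) (k : V) :
    ℝ≥0∞ :=
  ∑' l : {l : Fin n → V // ∑ j, l j = k}, ∏ j, f (l.1 j)

section convPow

variable {V : Type*}

lemma convPow_zero_of_ne [AddCommMonoid V] (f : V → ℝ≥0∞) {k : V} (hk : k ≠ 0) :
    convPow f 0 k = 0 := by
  have : IsEmpty {l : Fin 0 → V // ∑ j, l j = k} := ⟨fun l => hk (by simpa using l.2.symm)⟩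
  simp [convPow]

lemma convPow_zero_zero [AddCommMonoid V] (f : V → ℝ≥0∞) : convPow f 0 0 = 1 := by
  have : Unique {l : Fin 0 → V // ∑ j, l j = 0} :=
    ⟨⟨⟨finZeroElim, by simp⟩⟩, fun l => by ext j; exact j.elim0⟩
  simp [convPow]

def consSumEquiv [AddCommGroup V] (n : ℕ) (k : V) :
    {l : Fin (n + 1) → V // ∑ j, l j = k} ≃ (v : V) × {u : Fin n → V // ∑ j, u j = k - v} :=
  ((Fin.consEquiv fun _ => V).symm.subtypeEquiv fun l => by
      simp [Fin.sum_univ_succ, Fin.consEquiv, Fin.tail]).trans <|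
    (Equiv.subtypeProdEquivSigmaSubtype fun v (u : Fin n → V) => v + ∑ j, u j = k).trans <|
      Equiv.sigmaCongrRight fun v => Equiv.subtypeEquivRight fun u => eq_sub_iff_add_eq'.symm

lemma convPow_succ [AddCommGroup V] (f : V → ℝ≥0∞) (n : ℕ) (k : V) :
    convPow f (n + 1) k = ∑' v, f v * convPow f n (k - v) := by
  rw [convPow, ← (consSumEquiv n k).symm.tsum_eq, ENNReal.tsum_sigma']
  refine tsum_congr fun v => ?_
  rw [convPow, ← ENNReal.tsum_mul_left]
  refine tsum_congr fun u => ?_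
  rw [Fin.prod_univ_succ]
  rfl

end convPow

lemma ENNReal.tsum_fin_pi_prod {α : Type*} (f : α → ℝ≥0∞) :
    ∀ m : ℕ, ∑' g : Fin m → α, ∏ i, f (g i) = (∑' x, f x) ^ m
  | 0 => by simp [tsum_fintype]
  | m + 1 => by
    rw [← (Fin.consEquiv fun _ => α).tsum_eq, ENNReal.tsum_prod', pow_succ',
      ← ENNReal.tsum_fin_pi_prod f m, ← ENNReal.tsum_mul_right]
    refine tsum_congr fun x => ?_
    rw [← ENNReal.tsum_mul_left]
    refine tsum_congr fun g => ?_
    rw [Fin.prod_univ_succ]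
    rfl

lemma summable_one_add_sq_rpow_neg {t : ℝ} (ht : 1 / 2 < t) :
    Summable fun x : ℤ => (1 + (x : ℝ) ^ 2) ^ (-t) := by
  refine (Real.summable_abs_int_rpow (b := 2 * t) (by linarith)).of_norm_bounded_eventually <|
    (Filter.eventually_cofinite_ne 0).mono fun x hx => ?_
  have hx : (0 : ℝ) < |(x : ℝ)| := by simpa using hx
  calc ‖(1 + (x : ℝ) ^ 2) ^ (-t)‖ = (1 + |(x : ℝ)| ^ 2) ^ (-t) := by
        rw [sq_abs, Real.norm_of_nonneg (by positivity)]
    _ ≤ (|(x : ℝ)| ^ 2) ^ (-t) :=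
        Real.rpow_le_rpow_of_nonpos (by positivity) (by linarith) (by linarith)
    _ = |(x : ℝ)| ^ (-(2 * t)) := by
        rw [← Real.rpow_natCast, ← Real.rpow_mul hx.le]; push_cast; ring_nf

section LatticeWeights

variable {d : ℕ}

lemma one_le_lam (x : Fin d → ℤ) : 1 ≤ lam x :=
  le_add_of_nonneg_right (Finset.sum_nonneg fun _ _ => sq_nonneg _)

lemma lam_pos (x : Fin d → ℤ) : 0 < lam x := one_pos.trans_le (one_le_lam x)

lemma lam_add_le (a b : Fin d → ℤ) : lam (a + b) ≤ 2 * (lam a + lam b) := by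
  have h : ∀ i, ((a + b) i : ℝ) ^ 2 ≤ 2 * (a i : ℝ) ^ 2 + 2 * (b i : ℝ) ^ 2 := fun i => by
    push_cast [Pi.add_apply]
    linarith [sq_nonneg ((a i : ℝ) - b i)]
  have := Finset.sum_le_sum fun i (_ : i ∈ Finset.univ) => h i
  rw [Finset.sum_add_distrib, ← Finset.mul_sum, ← Finset.mul_sum] at this
  unfold lam
  linarith

lemma lam_rpow_neg_le_prod (v : Fin d → ℤ) {s t : ℝ} (ht : 0 ≤ t) (hts : d * t ≤ s) :
    lam v ^ (-s) ≤ ∏ i, (1 + (v i : ℝ) ^ 2) ^ (-t) := by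
  have hprod : ∏ i, (1 + (v i : ℝ) ^ 2) ≤ lam v ^ d := by
    calc ∏ i, (1 + (v i : ℝ) ^ 2) ≤ ∏ _i : Fin d, lam v := by
          gcongr with i
          exact (add_le_add_iff_left 1).2 <|
            Finset.single_le_sum (fun j _ => sq_nonneg ((v j : ℝ))) (Finset.mem_univ i)
      _ = lam v ^ d := by simp
  calc lam v ^ (-s) ≤ lam v ^ (-(d * t)) :=
        Real.rpow_le_rpow_of_exponent_le (one_le_lam v) (by linarith)
    _ = (lam v ^ d) ^ (-t) := by
        rw [← Real.rpow_natCast, ← Real.rpow_mul (lam_pos v).le, neg_mul_eq_mul_neg]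
    _ ≤ (∏ i, (1 + (v i : ℝ) ^ 2)) ^ (-t) :=
        Real.rpow_le_rpow_of_nonpos (by positivity) hprod (by linarith)
    _ = ∏ i, (1 + (v i : ℝ) ^ 2) ^ (-t) :=
        (Real.finsetProd_rpow _ _ (fun i _ => by positivity) _).symm

lemma lam_rpow_neg_mul_le (k v : Fin d → ℤ) {p q r : ℝ} (hr : 0 ≤ r) (hrp : r ≤ p)
    (hrq : r ≤ q) :
    lam v ^ (-p) * lam (k - v) ^ (-q) ≤
      4 ^ r * lam k ^ (-r) * (lam v ^ (-(p + q - r)) + lam (k - v) ^ (-(p + q - r))) := by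
  wlog hv : lam v ≤ lam (k - v) generalizing v p q
  · have := this (k - v) hrq hrp (by rw [sub_sub_cancel]; linarith)
    rwa [sub_sub_cancel, add_comm q p, mul_comm, add_comm (lam (k - v) ^ _)] at this
  have hk : lam k / 4 ≤ lam (k - v) := by
    linarith [add_sub_cancel v k ▸ lam_add_le v (k - v)]
  have hA := lam_pos v
  have hB := lam_pos (k - v)
  have hK := lam_pos k
  calc lam v ^ (-p) * lam (k - v) ^ (-q)
      = lam v ^ (-p) * lam (k - v) ^ (-(q - r)) * lam (k - v) ^ (-r) := by
        rw [mul_assoc, ← Real.rpow_add hB]; ring_nf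
    _ ≤ lam v ^ (-p) * lam v ^ (-(q - r)) * (lam k / 4) ^ (-r) := by
        gcongr ?_ * ?_ * ?_
        · exact Real.rpow_le_rpow_of_nonpos hA hv (by linarith)
        · exact Real.rpow_le_rpow_of_nonpos (by positivity) hk (by linarith)
    _ = 4 ^ r * lam k ^ (-r) * lam v ^ (-(p + q - r)) := by
        rw [← Real.rpow_add hA, Real.div_rpow hK.le (by norm_num),
          Real.rpow_neg (by norm_num : (0 : ℝ) ≤ 4), div_inv_eq_mul]
        ring_nf
    _ ≤ 4 ^ r * lam k ^ (-r) * (lam v ^ (-(p + q - r)) + lam (k - v) ^ (-(p + q - r))) := by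
        gcongr
        exact le_add_of_nonneg_right (Real.rpow_nonneg hB.le _)

noncomputable def lamWeight (s : ℝ) (v : Fin d → ℤ) : ℝ≥0∞ := ENNReal.ofReal (lam v ^ (-s))

lemma lamWeight_zero (s : ℝ) : lamWeight s (0 : Fin d → ℤ) = 1 := by
  simp [lamWeight, lam]

lemma ofReal_lam_rpow_mul_lamWeight (s : ℝ) (k : Fin d → ℤ) :
    ENNReal.ofReal (lam k ^ s) * lamWeight s k = 1 := by
  rw [lamWeight, ← ENNReal.ofReal_mul (Real.rpow_nonneg (lam_pos k).le _),
    ← Real.rpow_add (lam_pos k), add_neg_cancel, Real.rpow_zero, ENNReal.ofReal_one]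

lemma ofReal_lam_rpow_div_prod {ι : Type*} [Fintype ι] (γ a : ℝ) (k : Fin d → ℤ)
    (l : ι → Fin d → ℤ) :
    ENNReal.ofReal (lam k ^ γ / ∏ j, lam (l j) ^ a) =
      ENNReal.ofReal (lam k ^ γ) * ∏ j, lamWeight a (l j) := by
  rw [div_eq_mul_inv, ← Finset.prod_inv_distrib,
    ENNReal.ofReal_mul (Real.rpow_nonneg (lam_pos k).le _),
    ENNReal.ofReal_prod_of_nonneg fun j _ => inv_nonneg.2 (Real.rpow_nonneg (lam_pos _).le _)]
  simp only [lamWeight, Real.rpow_neg (lam_pos _).le]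

lemma tsum_lamWeight_ne_top {s : ℝ} (hs : d / 2 < s) : ∑' v : Fin d → ℤ, lamWeight s v ≠ ∞ := by
  obtain ⟨t, ht, hts⟩ : ∃ t : ℝ, 1 / 2 < t ∧ d * t ≤ s := by
    have hd : (0 : ℝ) < d + 1 := by positivity
    refine ⟨(s + 1 / 2) / (d + 1), ?_, ?_⟩
    · rw [lt_div_iff₀ hd]; linarith
    · rw [mul_div_assoc', div_le_iff₀ hd]; linarith
  have h1 : ∑' x : ℤ, ENNReal.ofReal ((1 + (x : ℝ) ^ 2) ^ (-t)) ≠ ∞ := by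
    rw [← ENNReal.ofReal_tsum_of_nonneg (fun x => by positivity) (summable_one_add_sq_rpow_neg ht)]
    exact ENNReal.ofReal_ne_top
  refine ne_top_of_le_ne_top (ENNReal.pow_ne_top (n := d) h1) ?_
  rw [← ENNReal.tsum_fin_pi_prod]
  refine ENNReal.tsum_le_tsum fun v => ?_
  rw [← ENNReal.ofReal_prod_of_nonneg fun i _ => by positivity]
  exact ENNReal.ofReal_le_ofReal (lam_rpow_neg_le_prod v (by linarith) hts)

lemma tsum_lamWeight_mul_lamWeight_sub_le {p q r : ℝ} (hr : 0 ≤ r) (hrp : r ≤ p)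
    (hrq : r ≤ q) (hs : d / 2 < p + q - r) :
    ∃ C ≠ ∞, ∀ k : Fin d → ℤ, ∑' v, lamWeight p v * lamWeight q (k - v) ≤ C * lamWeight r k := by
  set Z := ∑' v : Fin d → ℤ, lamWeight (p + q - r) v
  refine ⟨ENNReal.ofReal (4 ^ r) * (2 * Z), by finiteness [tsum_lamWeight_ne_top hs],
    fun k => ?_⟩
  have hpoint : ∀ v, lamWeight p v * lamWeight q (k - v) ≤
      ENNReal.ofReal (4 ^ r) * lamWeight r k *
        (lamWeight (p + q - r) v + lamWeight (p + q - r) (k - v)) := fun v => by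
    simp only [lamWeight]
    rw [← ENNReal.ofReal_mul (Real.rpow_nonneg (lam_pos _).le _),
      ← ENNReal.ofReal_mul (by positivity),
      ← ENNReal.ofReal_add (Real.rpow_nonneg (lam_pos _).le _) (Real.rpow_nonneg (lam_pos _).le _),
      ← ENNReal.ofReal_mul (mul_nonneg (by positivity) (Real.rpow_nonneg (lam_pos _).le _))]
    exact ENNReal.ofReal_le_ofReal (lam_rpow_neg_mul_le k v hr hrp hrq)
  calc ∑' v, lamWeight p v * lamWeight q (k - v)
      ≤ ∑' v, ENNReal.ofReal (4 ^ r) * lamWeight r k *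
          (lamWeight (p + q - r) v + lamWeight (p + q - r) (k - v)) :=
        ENNReal.tsum_le_tsum hpoint
    _ = ENNReal.ofReal (4 ^ r) * lamWeight r k * (Z + Z) := by
        rw [ENNReal.tsum_mul_left, ENNReal.tsum_add]
        congr 2
        exact (Equiv.subLeft k).tsum_eq (lamWeight (p + q - r))
    _ = ENNReal.ofReal (4 ^ r) * (2 * Z) * lamWeight r k := by ring

lemma convPow_lamWeight_le {a : ℝ} :
    ∀ (n : ℕ) {r : ℝ}, 0 ≤ r → r < a + ((n : ℝ) - 1) * min (a - d / 2) 0 →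
      ∃ C ≠ ∞, ∀ k : Fin d → ℤ, convPow (lamWeight a) n k ≤ C * lamWeight r k
  | 0, r, _, _ => ⟨1, ENNReal.one_ne_top, fun k => by
      rcases eq_or_ne k 0 with rfl | hk
      · rw [convPow_zero_zero, lamWeight_zero, one_mul]
      · rw [convPow_zero_of_ne _ hk]; exact zero_le⟩
  | n + 1, r, hr, hrn => by
    have hμ : min (a - d / 2) 0 ≤ 0 := min_le_right _ _
    have hμ' : (d : ℝ) / 2 ≤ a - min (a - d / 2) 0 := by linarith [min_le_left (a - d / 2) 0]
    rw [Nat.cast_succ, add_sub_cancel_right] at hrn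
    have hnμ : (n : ℝ) * min (a - d / 2) 0 ≤ 0 := mul_nonpos_of_nonneg_of_nonpos n.cast_nonneg hμ
    obtain ⟨ε, hε, hεr⟩ : ∃ ε > 0, r + ε < a + n * min (a - d / 2) 0 :=
      ⟨(a + n * min (a - d / 2) 0 - r) / 2, by linarith, by linarith⟩
    -- the decay exponent that `n` convolutions must provide so that one more yields `r`
    set q := r - min (a - d / 2) 0 + ε
    obtain ⟨C, hC, hCk⟩ := convPow_lamWeight_le (a := a) n (r := q) (by linarith)
      (by rw [sub_one_mul]; linarith)
    obtain ⟨C', hC', hC'k⟩ := tsum_lamWeight_mul_lamWeight_sub_le (d := d) (p := a) (q := q) hr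
      (by linarith) (by linarith) (by linarith)
    refine ⟨C * C', by finiteness, fun k => ?_⟩
    calc convPow (lamWeight a) (n + 1) k
        = ∑' v, lamWeight a v * convPow (lamWeight a) n (k - v) := convPow_succ _ n k
      _ ≤ ∑' v, lamWeight a v * (C * lamWeight q (k - v)) :=
          ENNReal.tsum_le_tsum fun v => by gcongr; exact hCk _
      _ = C * ∑' v, lamWeight a v * lamWeight q (k - v) := by
          rw [← ENNReal.tsum_mul_left]; congr 1; ext v; ring
      _ ≤ C * (C' * lamWeight r k) := by gcongr; exact hC'k k
      _ = C * C' * lamWeight r k := (mul_assoc _ _ _).symm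

end LatticeWeights

theorem averaged_wick_power_summability_general (n d : ℕ) (γ : ℝ) (hγ0 : 0 < γ)
    (hγ : γ < 1 + 1 / (n : ℝ) + ((n : ℝ) - 1) * min (1 + 1 / (n : ℝ) - (d : ℝ) / 2) 0) :
    (⨆ k : Fin d → ℤ,
        ∑' l : {l : Fin n → (Fin d → ℤ) // ∑ j, l j = k},
          ENNReal.ofReal ((lam k) ^ γ /
            ∏ j, (lam (l.1 j)) ^ (1 + 1 / (n : ℝ)))) < ⊤ := by
  obtain ⟨C, hC, hCk⟩ := convPow_lamWeight_le n hγ0.le hγ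
  refine (iSup_le fun k => ?_).trans_lt hC.lt_top
  calc ∑' l : {l : Fin n → (Fin d → ℤ) // ∑ j, l j = k},
        ENNReal.ofReal (lam k ^ γ / ∏ j, lam (l.1 j) ^ (1 + 1 / (n : ℝ)))
      = ENNReal.ofReal (lam k ^ γ) * convPow (lamWeight (1 + 1 / (n : ℝ))) n k := by
        simp only [ofReal_lam_rpow_div_prod, convPow, ENNReal.tsum_mul_left]
    _ ≤ ENNReal.ofReal (lam k ^ γ) * (C * lamWeight γ k) := by gcongr; exact hCk k
    _ = C := by rw [mul_left_comm, ofReal_lam_rpow_mul_lamWeight, mul_one]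

/-- Summability for averaged Wick powers: if `n, d ≥ 2` and `(n+1)/(n−1) > d/2`, then
for every `γ ∈ (0, 1 + 1/n + (n−1)·min(1 + 1/n − d/2, 0))` one has
`sup_{k ∈ ℤ^d} Σ_{l₁+⋯+l_n = k} (λ_k)^γ / ((λ_{l₁})^{1+1/n}⋯(λ_{l_n})^{1+1/n}) < ∞`. -/
theorem averaged_wick_power_summability (n d : ℕ) (hn : 2 ≤ n) (hd : 2 ≤ d)
    (h : ((n : ℝ) + 1) / ((n : ℝ) - 1) > (d : ℝ) / 2) (γ : ℝ) (hγ0 : 0 < γ)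
    (hγ : γ < 1 + 1 / (n : ℝ) + ((n : ℝ) - 1) * min (1 + 1 / (n : ℝ) - (d : ℝ) / 2) 0) :
    (⨆ k : Fin d → ℤ,
        ∑' l : {l : Fin n → (Fin d → ℤ) // ∑ j, l j = k},
          ENNReal.ofReal ((lam k) ^ γ /
            ∏ j, (lam (l.1 j)) ^ (1 + 1 / (n : ℝ)))) < ⊤ :=
  averaged_wick_power_summability_general n d γ hγ0 hγ
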